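/- arXiv:2101.03304 — 3 statements merged into one kernel-verified Lean document; each statement's English description precedes it below -/
import Mathlib

section
/- For every real-valued signal f : Ω → ℝ there exists an integer-valued signal g : Ω → ℤ such that (i) |Hf[0,1] − Hg[0,1]| ≤ 2^{−N−1}, (ii) |Hf[k,j] − Hg[k,j]| ≤ 2^{−N+(k−1)/2} for all (k,j) ∈ Ω̂ with k ≥ 1, and (iii) sup_{t∈Ω} |f(t) − g(t)| ≤ 1 − 2^{−N−1} < 1. -/
open Finset Real

noncomputable section

/-- The time points `t[n] = -1/2 + (2n-1)/2^(N+1)` for `n = 1, …, 2^N`. -/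
def tpt (N n : ℕ) : ℝ := -(1/2) + (2*(n:ℝ) - 1) / 2^(N+1)

/-- The Haar index points `P[k,j] = -1/2 + (2j-1)/2^k`. -/
def Ppt (k j : ℕ) : ℝ := -(1/2) + (2*(j:ℝ) - 1) / 2^k

/-- The mother Haar function `Haar[1,1]`. -/
def haar11 (t : ℝ) : ℝ :=
  if 0 < t ∧ t < 1/2 then 1 else if -(1/2) < t ∧ t < 0 then -1 else 0

/-- The Haar functions: `haar 0 1 = 1` and
`haar k j t = 2^((k-1)/2) * haar11 (2^(k-1) (t - P[k,j]))` for `k ≥ 1`. -/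
def haar (k j : ℕ) (t : ℝ) : ℝ :=
  if k = 0 then 1
  else (2:ℝ) ^ (((k:ℝ) - 1) / 2) * haar11 ((2:ℝ)^(k-1) * (t - Ppt k j))

/-- The inner product `⟨f,g⟩ = 2^{-N} ∑_{n=1}^{2^N} f[n] g[n]`. -/
def innerOmega (N : ℕ) (f g : ℕ → ℝ) : ℝ :=
  (1 / 2^N) * ∑ n ∈ Finset.Icc 1 (2^N), f n * g n

/-- The Haar transform `Hf[k,j] = ⟨Haar[k,j], f⟩`. -/
def Htrans (N : ℕ) (f : ℕ → ℝ) (k j : ℕ) : ℝ :=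
  innerOmega N (fun n => haar k j (tpt N n)) f

/-- The discrete Fourier transform `Ff[ξ] = 2^{-N} ∑_{n=1}^{2^N} e^{-2πi t[n] ξ} f[n]`. -/
def Ftrans (N : ℕ) (f : ℕ → ℝ) (ξ : ℤ) : ℂ :=
  (1 / 2^N : ℂ) * ∑ n ∈ Finset.Icc 1 (2^N),
    Complex.exp (-(2 * (Real.pi : ℂ) * Complex.I) * (tpt N n : ℂ) * (ξ : ℂ)) * (f n : ℂ)

/-!
Quantize top-down along the dyadic tree of block sums `S k q` of `f` (blocks of length
`2 ^ (N - k)`) to an integer tree `T`: a root is rounded, a left child is rounded after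
absorbing half of its parent's error, and the right child is chosen so that the two children
add up to the parent. The errors `e = S - T` then satisfy `e left = e parent / 2 + r` and
`e right = e parent / 2 - r` with `|r| ≤ 1 / 2`. Hence `|e| ≤ 1 - 2 ^ (-(k + 1))` at level `k`,
which at the leaves is the pointwise bound, and sibling errors differ by at most `1`. A Haar
coefficient of `f - g` is `2 ^ (-N) * 2 ^ ((k - 1) / 2)` times the difference of the errors of
two sibling blocks, and the mean of `f - g` is `2 ^ (-N)` times the root error.
-/

-- The children of `(k, p)` are `(k + 1, 2 * p)` and `(k + 1, 2 * p + 1)`.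
def dyadicRound (S : ℕ → ℕ → ℝ) : ℕ → ℕ → ℤ
  | 0, q => round (S 0 q)
  | k + 1, q =>
    let left := round (S (k + 1) (2 * (q / 2)) - (S k (q / 2) - dyadicRound S k (q / 2)) / 2)
    if q % 2 = 0 then left else dyadicRound S k (q / 2) - left

def dyadicRoundErr (S : ℕ → ℕ → ℝ) (k q : ℕ) : ℝ := S k q - dyadicRound S k q

section DyadicRound

variable (S : ℕ → ℕ → ℝ)

theorem dyadicRound_zero (q : ℕ) : dyadicRound S 0 q = round (S 0 q) := by
  rw [dyadicRound]

theorem dyadicRound_two_mul (k p : ℕ) :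
    dyadicRound S (k + 1) (2 * p) = round (S (k + 1) (2 * p) - dyadicRoundErr S k p / 2) := by
  simp [dyadicRound, dyadicRoundErr]

theorem dyadicRound_two_mul_add_one (k p : ℕ) :
    dyadicRound S (k + 1) (2 * p + 1) = dyadicRound S k p - dyadicRound S (k + 1) (2 * p) := by
  have hdiv : (2 * p + 1) / 2 = p := by omega
  simp [dyadicRound, hdiv]

theorem dyadicRound_eq_add (k p : ℕ) :
    dyadicRound S k p = dyadicRound S (k + 1) (2 * p) + dyadicRound S (k + 1) (2 * p + 1) := by
  rw [dyadicRound_two_mul_add_one]; ring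

theorem dyadicRoundErr_children {k p : ℕ}
    (hS : S k p = S (k + 1) (2 * p) + S (k + 1) (2 * p + 1)) :
    ∃ r : ℝ, |r| ≤ 1 / 2 ∧
      dyadicRoundErr S (k + 1) (2 * p) = dyadicRoundErr S k p / 2 + r ∧
      dyadicRoundErr S (k + 1) (2 * p + 1) = dyadicRoundErr S k p / 2 - r := by
  set x := S (k + 1) (2 * p) - dyadicRoundErr S k p / 2
  have hleft : dyadicRoundErr S (k + 1) (2 * p) = dyadicRoundErr S k p / 2 + (x - round x) := by
    rw [dyadicRoundErr, dyadicRound_two_mul]; ring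
  refine ⟨x - round x, abs_sub_round x, hleft, ?_⟩
  have hsum : dyadicRoundErr S k p =
      dyadicRoundErr S (k + 1) (2 * p) + dyadicRoundErr S (k + 1) (2 * p + 1) := by
    simp only [dyadicRoundErr, hS, dyadicRound_eq_add S k p, Int.cast_add]; ring
  linarith

theorem abs_dyadicRoundErr_le {K : ℕ}
    (hS : ∀ k < K, ∀ p, S k p = S (k + 1) (2 * p) + S (k + 1) (2 * p + 1)) :
    ∀ k ≤ K, ∀ q, |dyadicRoundErr S k q| ≤ 1 - (1 / 2) ^ (k + 1) := by
  intro k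
  induction k with
  | zero =>
    intro _ q
    rw [dyadicRoundErr, dyadicRound_zero]
    norm_num [abs_sub_round]
  | succ k ih =>
    intro hk q
    have hparent (p : ℕ) : |dyadicRoundErr S k p / 2| ≤ (1 - (1 / 2) ^ (k + 1)) / 2 := by
      rw [abs_div, abs_two]; gcongr; exact ih (by omega) p
    have hbound : (1 - (1 / 2 : ℝ) ^ (k + 1)) / 2 + 1 / 2 = 1 - (1 / 2) ^ (k + 1 + 1) := by ring
    obtain ⟨p, rfl | rfl⟩ : ∃ p, q = 2 * p ∨ q = 2 * p + 1 := ⟨q / 2, by omega⟩ <;>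
      obtain ⟨r, hr, hleft, hright⟩ := dyadicRoundErr_children S (hS k (by omega) p) <;>
      rw [← hbound]
    · rw [hleft]
      exact (abs_add_le _ _).trans (add_le_add (hparent p) hr)
    · rw [hright]
      exact (abs_sub _ _).trans (add_le_add (hparent p) hr)

theorem abs_dyadicRoundErr_sub_le {k p : ℕ}
    (hS : S k p = S (k + 1) (2 * p) + S (k + 1) (2 * p + 1)) :
    |dyadicRoundErr S (k + 1) (2 * p + 1) - dyadicRoundErr S (k + 1) (2 * p)| ≤ 1 := by
  obtain ⟨r, hr, hleft, hright⟩ := dyadicRoundErr_children S hS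
  rw [hleft, hright, show dyadicRoundErr S k p / 2 - r - (dyadicRoundErr S k p / 2 + r) = -2 * r
    by ring, abs_mul]
  norm_num
  linarith

end DyadicRound

theorem sum_range_two_pow_of_eq_add {M : Type*} [AddCommMonoid M] (T : ℕ → ℕ → M)
    (hT : ∀ k p, T k p = T (k + 1) (2 * p) + T (k + 1) (2 * p + 1)) (m : ℕ) :
    ∀ k q, ∑ i ∈ range (2 ^ m), T (k + m) (q * 2 ^ m + i) = T k q := by
  induction m with
  | zero => simp
  | succ m ih =>
    intro k q
    rw [pow_succ, mul_two, sum_range_add, hT k q, ← ih (k + 1) (2 * q),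
      ← ih (k + 1) (2 * q + 1)]
    congr 1 <;> refine sum_congr rfl fun i _ => congr_arg₂ T (by omega) (by ring)

theorem sum_range_mul_eq_sum_sum {M : Type*} [AddCommMonoid M] (F : ℕ → M) (a b : ℕ) :
    ∑ n ∈ range (a * b), F n = ∑ q ∈ range a, ∑ i ∈ range b, F (q * b + i) := by
  induction a with
  | zero => simp
  | succ a ih => rw [Nat.succ_mul, sum_range_add, ih, sum_range_succ]

theorem sum_Icc_one_eq_sum_range {M : Type*} [AddCommMonoid M] (F : ℕ → M) (n : ℕ) :
    ∑ i ∈ Icc 1 n, F i = ∑ i ∈ range n, F (i + 1) := by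
  rw [← Ico_add_one_right_eq_Icc, sum_Ico_eq_sum_range]
  simp [add_comm]

-- Signals are indexed from `1`, blocks from `0`.
def blockSum (d : ℕ → ℝ) (b q : ℕ) : ℝ := ∑ i ∈ range b, d (q * b + i + 1)

theorem blockSum_one (d : ℕ → ℝ) (q : ℕ) : blockSum d 1 q = d (q + 1) := by
  simp [blockSum]

theorem blockSum_two_mul (d : ℕ → ℝ) (b q : ℕ) :
    blockSum d (2 * b) q = blockSum d b (2 * q) + blockSum d b (2 * q + 1) := by
  rw [blockSum, two_mul, sum_range_add]
  congr 1 <;> refine sum_congr rfl fun i _ => congr_arg d (by ring)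

theorem haar11_half_int_add {z : ℤ} {s : ℝ} (hs0 : 0 < s) (hs : s < 1 / 2) :
    haar11 (z / 2 + s) = if z = 0 then 1 else if z = -1 then -1 else 0 := by
  rcases lt_trichotomy z 0 with hz | rfl | hz
  · rcases eq_or_lt_of_le (Int.le_sub_one_of_lt hz) with rfl | hz'
    · rw [haar11, if_neg (by norm_num; intro h; linarith),
        if_pos (by norm_num; constructor <;> linarith)]
      norm_num
    · have : (z : ℝ) ≤ -2 := by exact_mod_cast (by omega : z ≤ -2)
      rw [if_neg hz.ne, if_neg (by omega), haar11, if_neg (by intro h; linarith [h.1]),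
        if_neg (by intro h; linarith [h.1])]
  · rw [haar11, if_pos (by norm_num; exact ⟨hs0, hs⟩)]
    norm_num
  · have : (1 : ℝ) ≤ z := by exact_mod_cast hz
    rw [if_neg hz.ne', if_neg (by omega), haar11, if_neg (by intro h; linarith [h.2]),
      if_neg (by intro h; linarith [h.1])]

theorem haar_tpt {N k : ℕ} (hk : 1 ≤ k) (hkN : k ≤ N) (p q : ℕ) {i : ℕ}
    (hi : i < 2 ^ (N - k)) :
    haar k (p + 1) (tpt N (q * 2 ^ (N - k) + i + 1)) =
      (2 : ℝ) ^ (((k : ℝ) - 1) / 2) *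
        (if q = 2 * p + 1 then 1 else if q = 2 * p then -1 else 0) := by
  have hpow : (2 : ℝ) ^ (N + 1) = 2 ^ (k - 1) * 2 ^ (N - k) * 4 := by
    rw [← pow_add, show (4 : ℝ) = 2 ^ 2 by norm_num, ← pow_add]; congr 1; omega
  have hpowk : (2 : ℝ) ^ k = 2 ^ (k - 1) * 2 := by rw [← pow_succ]; congr 1; omega
  have hb : (i : ℝ) + 1 ≤ 2 ^ (N - k) := by exact_mod_cast hi
  have hpoint : (2 : ℝ) ^ (k - 1) * (tpt N (q * 2 ^ (N - k) + i + 1) - Ppt k (p + 1)) =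
      (((q : ℤ) - (2 * p + 1) : ℤ) : ℝ) / 2 + (i + 1 / 2) / (2 * 2 ^ (N - k)) := by
    simp only [tpt, Ppt, hpow, hpowk]
    push_cast
    field_simp
    ring
  have hzero : (q : ℤ) - (2 * p + 1) = 0 ↔ q = 2 * p + 1 := by omega
  have hneg : (q : ℤ) - (2 * p + 1) = -1 ↔ q = 2 * p := by omega
  rw [haar, if_neg (by omega), hpoint, haar11_half_int_add (by positivity)
    (by rw [div_lt_iff₀ (by positivity)]; linarith)]
  simp only [hzero, hneg]

theorem Htrans_sub (N : ℕ) (f g : ℕ → ℝ) (k j : ℕ) :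
    Htrans N f k j - Htrans N g k j = Htrans N (fun n => f n - g n) k j := by
  simp only [Htrans, innerOmega]
  rw [← mul_sub, ← sum_sub_distrib]
  simp only [mul_sub]

theorem Htrans_zero_one (N : ℕ) (d : ℕ → ℝ) :
    Htrans N d 0 1 = 1 / 2 ^ N * blockSum d (2 ^ N) 0 := by
  simp [Htrans, innerOmega, haar, blockSum, sum_Icc_one_eq_sum_range]

theorem Htrans_eq_blockSum_sub {N k : ℕ} (hk : 1 ≤ k) (hkN : k ≤ N) {p : ℕ}
    (hp : p + 1 ≤ 2 ^ (k - 1)) (d : ℕ → ℝ) :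
    Htrans N d k (p + 1) = 1 / 2 ^ N * ((2 : ℝ) ^ (((k : ℝ) - 1) / 2) *
      (blockSum d (2 ^ (N - k)) (2 * p + 1) - blockSum d (2 ^ (N - k)) (2 * p))) := by
  set b := 2 ^ (N - k)
  have hN : 2 ^ N = 2 ^ k * b := by rw [← pow_add]; congr 1; omega
  have hright : 2 * p + 1 < 2 ^ k := by
    rw [show k = k - 1 + 1 by omega, pow_succ]; omega
  have hblock (q : ℕ) :
      ∑ i ∈ range b, haar k (p + 1) (tpt N (q * b + i + 1)) * d (q * b + i + 1) =
      (2 : ℝ) ^ (((k : ℝ) - 1) / 2) *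
        (((if q = 2 * p + 1 then 1 else 0) - if q = 2 * p then 1 else 0) * blockSum d b q) := by
    have hsign : ((if q = 2 * p + 1 then 1 else if q = 2 * p then -1 else 0) : ℝ) =
        (if q = 2 * p + 1 then 1 else 0) - if q = 2 * p then 1 else 0 := by
      split_ifs <;> first | omega | ring
    rw [blockSum, ← hsign, mul_sum, mul_sum]
    refine sum_congr rfl fun i hi => ?_
    rw [haar_tpt hk hkN p q (mem_range.mp hi)]
    ring
  rw [Htrans, innerOmega, sum_Icc_one_eq_sum_range, hN, sum_range_mul_eq_sum_sum]
  simp only [add_assoc] at hblock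
  simp only [add_assoc, hblock, ← mul_sum, sub_mul, ite_mul, one_mul, zero_mul, sum_sub_distrib,
    sum_ite_eq', mem_range, hright, (by omega : 2 * p < 2 ^ k), if_true]

def haarBlockSums (N : ℕ) (f : ℕ → ℝ) (k q : ℕ) : ℝ := blockSum f (2 ^ (N - k)) q

def haarQuantize (N : ℕ) (f : ℕ → ℝ) (n : ℕ) : ℤ :=
  dyadicRound (haarBlockSums N f) N (n - 1)

theorem haarBlockSums_eq_add {N k : ℕ} (f : ℕ → ℝ) (hk : k < N) (p : ℕ) :
    haarBlockSums N f k p =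
      haarBlockSums N f (k + 1) (2 * p) + haarBlockSums N f (k + 1) (2 * p + 1) := by
  rw [haarBlockSums, show N - k = N - (k + 1) + 1 by omega, pow_succ', blockSum_two_mul]; rfl

section HaarQuantize

variable {N : ℕ} (f : ℕ → ℝ)

theorem blockSum_sub_haarQuantize {k : ℕ} (hk : k ≤ N) (q : ℕ) :
    blockSum (fun n => f n - haarQuantize N f n) (2 ^ (N - k)) q =
      dyadicRoundErr (haarBlockSums N f) k q := by
  have hleaves :=
    sum_range_two_pow_of_eq_add (fun k q => (dyadicRound (haarBlockSums N f) k q : ℝ))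
    (fun k p => by simp only [dyadicRound_eq_add _ k p, Int.cast_add]) (N - k) k q
  rw [show k + (N - k) = N by omega] at hleaves
  simp only [blockSum, sum_sub_distrib, haarQuantize, Nat.add_sub_cancel, hleaves]
  rfl

theorem abs_sub_haarQuantize_le {n : ℕ} (hn : 1 ≤ n) :
    |f n - haarQuantize N f n| ≤ 1 - (1 / 2) ^ (N + 1) := by
  have hleaf := blockSum_sub_haarQuantize f (le_refl N) (n - 1)
  rw [Nat.sub_self, pow_zero, blockSum_one, Nat.sub_add_cancel hn] at hleaf
  rw [hleaf]
  exact abs_dyadicRoundErr_le _ (fun k hk p => haarBlockSums_eq_add f hk p) N le_rfl (n - 1)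

theorem abs_Htrans_zero_one_sub_haarQuantize_le :
    |Htrans N f 0 1 - Htrans N (fun n => (haarQuantize N f n : ℝ)) 0 1| ≤
      1 / 2 ^ N * (1 / 2) := by
  have hroot := blockSum_sub_haarQuantize f (Nat.zero_le N) 0
  rw [Nat.sub_zero] at hroot
  rw [Htrans_sub, Htrans_zero_one, hroot, abs_mul, abs_of_pos (by positivity)]
  gcongr
  exact (abs_dyadicRoundErr_le _ (fun k hk p => haarBlockSums_eq_add f hk p) 0 (Nat.zero_le N)
    0).trans_eq (by norm_num)

theorem abs_Htrans_sub_haarQuantize_le {k j : ℕ} (hk : 1 ≤ k) (hkN : k ≤ N) (hj : 1 ≤ j)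
    (hj' : j ≤ 2 ^ (k - 1)) :
    |Htrans N f k j - Htrans N (fun n => (haarQuantize N f n : ℝ)) k j| ≤
      1 / 2 ^ N * (2 : ℝ) ^ (((k : ℝ) - 1) / 2) := by
  obtain ⟨p, rfl⟩ : ∃ p, j = p + 1 := ⟨j - 1, by omega⟩
  obtain ⟨k, rfl⟩ : ∃ k', k = k' + 1 := ⟨k - 1, by omega⟩
  rw [Htrans_sub, Htrans_eq_blockSum_sub hk hkN hj', blockSum_sub_haarQuantize f hkN,
    blockSum_sub_haarQuantize f hkN, abs_mul, abs_mul, abs_of_pos (by positivity),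
    abs_of_pos (by positivity)]
  gcongr
  exact mul_le_of_le_one_right (by positivity)
    (abs_dyadicRoundErr_sub_le _ (haarBlockSums_eq_add f (by omega) p))

end HaarQuantize

theorem two_rpow_neg_natCast_add (N : ℕ) (x : ℝ) :
    (2 : ℝ) ^ (-(N : ℝ) + x) = 1 / 2 ^ N * 2 ^ x := by
  rw [rpow_add two_pos, rpow_neg two_pos.le, rpow_natCast, one_div]

/-- **Theorem 1 (main quantization theorem).** For every real-valued signal `f : Ω → ℝ`
there is an integer-valued signal `g : Ω → ℤ` with
`|Hf[0,1] − Hg[0,1]| ≤ 2^{−N−1}`,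
`|Hf[k,j] − Hg[k,j]| ≤ 2^{−N+(k−1)/2}` for all `(k,j) ∈ Ω̂` with `k ≥ 1`, and
`sup_{t∈Ω} |f(t) − g(t)| ≤ 1 − 2^{−N−1} < 1`. -/
theorem main_quantization (N : ℕ) (f : ℕ → ℝ) :
    ∃ g : ℕ → ℤ,
      |Htrans N f 0 1 - Htrans N (fun n => (g n : ℝ)) 0 1| ≤ (2:ℝ) ^ (-(N:ℝ) - 1) ∧
      (∀ k j : ℕ, 1 ≤ k → k ≤ N → 1 ≤ j → j ≤ 2^(k-1) →
        |Htrans N f k j - Htrans N (fun n => (g n : ℝ)) k j| ≤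
          (2:ℝ) ^ (-(N:ℝ) + ((k:ℝ) - 1) / 2)) ∧
      (∀ n ∈ Finset.Icc 1 (2^N), |f n - (g n : ℝ)| ≤ 1 - (2:ℝ) ^ (-(N:ℝ) - 1)) ∧
      1 - (2:ℝ) ^ (-(N:ℝ) - 1) < 1 := by
  have hmean : (2 : ℝ) ^ (-(N : ℝ) - 1) = 1 / 2 ^ N * (1 / 2) := by
    rw [sub_eq_add_neg, two_rpow_neg_natCast_add, rpow_neg_one, one_div 2]
  refine ⟨haarQuantize N f, ?_, fun k j hk hkN hj hj' => ?_, fun n hn => ?_, ?_⟩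
  · rw [hmean]
    exact abs_Htrans_zero_one_sub_haarQuantize_le f
  · rw [two_rpow_neg_natCast_add]
    exact abs_Htrans_sub_haarQuantize_le f hk hkN hj hj'
  · rw [hmean, ← one_div_pow, ← pow_succ]
    exact abs_sub_haarQuantize_le f (mem_Icc.mp hn).1
  · have : (0 : ℝ) < 2 ^ (-(N : ℝ) - 1) := by positivity
    linarith
end
end

section
/- For every (k,j) ∈ Ω̂ with k ≥ 1 and every ξ ∈ Ξ with ξ ≠ 0, the discrete Fourier transform of the Haar function satisfies F(Haar[k,j])[ξ] = (2^{(k−1)/2}/2^N) · e^{−2πi P[k,j] ξ} · (1 − cos(2π·2^{−k}ξ)) / (i sin(2^{−N}πξ)); in particular |F(Haar[k,j])[ξ]| = (2^{(k−1)/2}/2^N) · (1 − cos(2π·2^{−k}ξ)) / |sin(2^{−N}πξ)|. -/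
/-!
On the grid `Ω`, `Haar[k,j]` is `2^{(k-1)/2}` times the indicator of a block of `2^{N-k}`
consecutive points minus the indicator of the block just before it. Over a block, the sum of
`e^{-2πi t ξ}` is a phase times a geometric sum of odd powers of `e^{-iπξ/2^N}`, which telescopes
to `(1 - e^{-2πiξ/2^k}) / (2i sin(πξ/2^N))`. The two blocks differ by the phase `e^{2πiξ/2^k}`,
and `(1 - e^{iθ})(1 - e^{-iθ}) = 2(1 - cos θ)`. The sine does not vanish because `0 < |ξ| < 2^N`.
-/

open Finset Real

noncomputable section

def fourierKernel (ξ : ℤ) (x : ℝ) : ℂ :=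
  Complex.exp (-(2 * (π : ℂ) * Complex.I) * (x : ℂ) * (ξ : ℂ))

lemma fourierKernel_add (ξ : ℤ) (x y : ℝ) :
    fourierKernel ξ (x + y) = fourierKernel ξ x * fourierKernel ξ y := by
  rw [fourierKernel, fourierKernel, fourierKernel, ← Complex.exp_add]
  push_cast
  ring_nf

lemma norm_fourierKernel (ξ : ℤ) (x : ℝ) : ‖fourierKernel ξ x‖ = 1 := by
  rw [fourierKernel, show -(2 * (π : ℂ) * Complex.I) * (x : ℂ) * (ξ : ℂ)
    = ((-(2 * π * x * ξ) : ℝ) : ℂ) * Complex.I by push_cast; ring]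
  exact Complex.norm_exp_ofReal_mul_I _

lemma Complex.sum_range_exp_neg_odd_mul_mul_I (φ : ℂ) (hφ : Complex.sin φ ≠ 0) (m : ℕ) :
    ∑ l ∈ range m, Complex.exp (-((2 * l + 1) * φ) * Complex.I) =
      (1 - Complex.exp (-(2 * m * φ) * Complex.I)) / (2 * Complex.I * Complex.sin φ) := by
  have hden : 2 * Complex.I * Complex.sin φ =
      Complex.exp (φ * Complex.I) - Complex.exp (-φ * Complex.I) := by
    rw [mul_assoc, mul_left_comm, Complex.two_sin]
    linear_combination
      (Complex.exp (-φ * Complex.I) - Complex.exp (φ * Complex.I)) * Complex.I_sq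
  have htelescope : ∀ l : ℕ, Complex.exp (-((2 * l + 1) * φ) * Complex.I) *
      (Complex.exp (φ * Complex.I) - Complex.exp (-φ * Complex.I)) =
      Complex.exp (-(2 * l * φ) * Complex.I) -
        Complex.exp (-(2 * (l + 1 : ℕ) * φ) * Complex.I) := by
    intro l
    rw [mul_sub, ← Complex.exp_add, ← Complex.exp_add]
    push_cast
    ring_nf
  rw [eq_div_iff (by simp [hφ, Complex.I_ne_zero]), sum_mul, hden,
    sum_congr rfl fun l _ => htelescope l, sum_range_sub']
  simp

lemma Complex.one_sub_exp_mul_I_mul_one_sub_exp_neg_mul_I (θ : ℂ) :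
    (1 - Complex.exp (θ * Complex.I)) * (1 - Complex.exp (-(θ * Complex.I))) =
      2 * (1 - Complex.cos θ) := by
  have hprod : Complex.exp (θ * Complex.I) * Complex.exp (-(θ * Complex.I)) = 1 := by
    rw [← Complex.exp_add, add_neg_cancel, Complex.exp_zero]
  have hcos := Complex.two_cos θ
  rw [neg_mul] at hcos
  linear_combination hprod + hcos

lemma haar11_int_sub_half_div (d : ℤ) {m : ℕ} (hm : 0 < m) :
    haar11 (((d : ℝ) - 1/2) / (2 * m)) =
      (if 0 < d ∧ d ≤ m then 1 else 0) - (if -(m : ℤ) < d ∧ d ≤ 0 then 1 else 0) := by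
  have h2m : (0 : ℝ) < 2 * m := by positivity
  have hlt : ∀ e : ℤ, (d : ℝ) - 1/2 < e ↔ d ≤ e := by
    intro e
    constructor
    · intro h
      by_contra! h'
      have : (e : ℝ) + 1 ≤ d := by exact_mod_cast h'
      linarith
    · intro h
      have : (d : ℝ) ≤ e := by exact_mod_cast h
      linarith
  have hgt : ∀ e : ℤ, (e : ℝ) < d - 1/2 ↔ e < d := by
    intro e
    constructor
    · intro h
      by_contra! h'
      have : (d : ℝ) ≤ e := by exact_mod_cast h'
      linarith
    · intro h
      have : (e : ℝ) + 1 ≤ d := by exact_mod_cast h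
      linarith
  have c1 : 0 < ((d : ℝ) - 1/2) / (2 * m) ↔ 0 < d := by
    rw [div_pos_iff_of_pos_right h2m]; simpa using hgt 0
  have c2 : ((d : ℝ) - 1/2) / (2 * m) < 1/2 ↔ d ≤ m := by
    rw [div_lt_iff₀ h2m, show 1/2 * (2 * (m : ℝ)) = ((m : ℤ) : ℝ) by push_cast; ring]
    exact hlt m
  have c3 : -(1/2) < ((d : ℝ) - 1/2) / (2 * m) ↔ -(m : ℤ) < d := by
    rw [lt_div_iff₀ h2m, show -(1/2) * (2 * (m : ℝ)) = ((-(m : ℤ) : ℤ) : ℝ) by push_cast; ring]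
    exact hgt _
  have c4 : ((d : ℝ) - 1/2) / (2 * m) < 0 ↔ d ≤ 0 := by
    rw [div_lt_iff₀ h2m, zero_mul]; simpa using hlt 0
  simp only [haar11, c1, c2, c3, c4]
  split_ifs <;> first | omega | norm_num

lemma haar_succ_tpt (a b i n : ℕ) :
    haar (a + 1) (i + 1) (tpt (a + 1 + b) n) = (2 : ℝ) ^ ((((a + 1 : ℕ) : ℝ) - 1) / 2) *
      ((if n ∈ Icc (2 * i * 2^b + 2^b + 1) (2 * i * 2^b + 2^b + 2^b) then 1 else 0) -
        (if n ∈ Icc (2 * i * 2^b + 1) (2 * i * 2^b + 2^b) then 1 else 0)) := by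
  have harg : (2 : ℝ) ^ a * (tpt (a + 1 + b) n - Ppt (a + 1) (i + 1)) =
      ((((n : ℤ) - (2 * i * 2^b + 2^b : ℕ) : ℤ) : ℝ) - 1/2) / (2 * ((2^b : ℕ) : ℝ)) := by
    simp only [tpt, Ppt]
    push_cast
    field_simp
    ring
  rw [haar, if_neg (Nat.succ_ne_zero a), Nat.add_sub_cancel, harg,
    haar11_int_sub_half_div _ (Nat.two_pow_pos b)]
  generalize 2 ^ b = m
  simp only [mem_Icc]
  split_ifs <;> first | omega | norm_num

lemma Finset.sum_mul_ite_mem_sub_ite_mem {ι R : Type*} [CommRing R] [DecidableEq ι]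
    {s P Q : Finset ι} (f : ι → R) (hP : P ⊆ s) (hQ : Q ⊆ s) :
    ∑ n ∈ s, f n * ((if n ∈ Q then 1 else 0) - (if n ∈ P then 1 else 0)) =
      ∑ n ∈ Q, f n - ∑ n ∈ P, f n := by
  simp only [mul_sub, mul_ite, mul_one, mul_zero, sum_sub_distrib, sum_ite_mem,
    inter_eq_right.mpr hP, inter_eq_right.mpr hQ]

lemma sum_Icc_fourierKernel_tpt (ξ : ℤ) (N c m : ℕ) :
    ∑ n ∈ Icc (c + 1) (c + m), fourierKernel ξ (tpt N n) =
      fourierKernel ξ (-(1/2) + c / 2^N) *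
        ∑ l ∈ range m, fourierKernel ξ ((2 * l + 1) / 2^(N + 1)) := by
  rw [← Ico_add_one_right_eq_Icc, sum_Ico_eq_sum_range, show c + m + 1 - (c + 1) = m by omega,
    mul_sum]
  refine sum_congr rfl fun l _ => ?_
  rw [← fourierKernel_add, tpt]
  congr 1
  push_cast
  field_simp
  ring

lemma sum_range_fourierKernel_odd_div_two_pow (ξ : ℤ) (N m : ℕ)
    (hsin : Real.sin (π * ξ / 2^N) ≠ 0) :
    ∑ l ∈ range m, fourierKernel ξ ((2 * l + 1) / 2^(N + 1)) =
      (1 - fourierKernel ξ (m / 2^N)) / (2 * Complex.I * Real.sin (π * ξ / 2^N)) := by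
  have hkernel : ∀ x : ℝ, fourierKernel ξ (x / 2^(N + 1)) =
      Complex.exp (-(x * ((π * ξ / 2^N : ℝ) : ℂ)) * Complex.I) := by
    intro x
    rw [fourierKernel]
    congr 1
    push_cast
    field_simp
    ring
  rw [show (m : ℝ) / 2^N = (2 * m) / 2^(N + 1) by rw [pow_succ]; field_simp]
  simp only [hkernel]
  push_cast
  exact Complex.sum_range_exp_neg_odd_mul_mul_I _ (by exact_mod_cast hsin) m

lemma sum_fourierKernel_mul_haar (a b i : ℕ) (hi : i + 1 ≤ 2^a) (ξ : ℤ)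
    (hsin : Real.sin (π * ξ / 2^(a + 1 + b)) ≠ 0) :
    ∑ n ∈ Icc 1 (2^(a + 1 + b)),
        fourierKernel ξ (tpt (a + 1 + b) n) * (haar (a + 1) (i + 1) (tpt (a + 1 + b) n) : ℂ) =
      (((2 : ℝ) ^ ((((a + 1 : ℕ) : ℝ) - 1) / 2) : ℝ) : ℂ) * fourierKernel ξ (Ppt (a + 1) (i + 1)) *
        ((1 - Real.cos (2 * π * ξ / 2^(a + 1)) : ℝ) : ℂ) /
        (Complex.I * Real.sin (π * ξ / 2^(a + 1 + b))) := by
  have hblocks : 2 * i * 2^b + 2^b + 2^b ≤ 2^(a + 1 + b) := by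
    rw [show 2^(a + 1 + b) = 2 * 2^a * 2^b by rw [pow_add, pow_succ]; ring]
    nlinarith [Nat.one_le_two_pow (n := b)]
  have hright :
      -(1/2) + ((2 * i * 2^b + 2^b : ℕ) : ℝ) / 2^(a + 1 + b) = Ppt (a + 1) (i + 1) := by
    rw [Ppt]; push_cast; field_simp; ring
  have hleft : -(1/2) + ((2 * i * 2^b : ℕ) : ℝ) / 2^(a + 1 + b) =
      Ppt (a + 1) (i + 1) + -(1 / 2^(a + 1)) := by
    rw [Ppt]; push_cast; field_simp; ring
  have hwidth : ((2^b : ℕ) : ℝ) / 2^(a + 1 + b) = 1 / 2^(a + 1) := by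
    push_cast; rw [pow_add]; field_simp
  set θ : ℝ := 2 * π * ξ / 2^(a + 1) with hθ
  have hkernel : fourierKernel ξ (1 / 2^(a + 1)) = Complex.exp (-(θ * Complex.I)) := by
    rw [fourierKernel, hθ]; congr 1; push_cast; ring
  have hkernel_neg : fourierKernel ξ (-(1 / 2^(a + 1))) = Complex.exp (θ * Complex.I) := by
    rw [fourierKernel, hθ]; congr 1; push_cast; ring
  have hsin' : ((Real.sin (π * ξ / 2^(a + 1 + b)) : ℝ) : ℂ) ≠ 0 := by exact_mod_cast hsin
  simp only [haar_succ_tpt, Complex.ofReal_mul, Complex.ofReal_sub, apply_ite ((↑) : ℝ → ℂ),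
    Complex.ofReal_one, Complex.ofReal_zero, mul_left_comm (fourierKernel ξ _)]
  rw [← mul_sum, sum_mul_ite_mem_sub_ite_mem _ (fun n hn => by simp only [mem_Icc] at hn ⊢; omega)
      (fun n hn => by simp only [mem_Icc] at hn ⊢; omega),
    sum_Icc_fourierKernel_tpt, sum_Icc_fourierKernel_tpt, ← sub_mul,
    sum_range_fourierKernel_odd_div_two_pow _ _ _ hsin, hright, hleft, hwidth, fourierKernel_add,
    hkernel, hkernel_neg, Complex.ofReal_cos, ← mul_one_sub]
  field_simp
  linear_combination (((2 : ℝ) ^ ((((a + 1 : ℕ) : ℝ) - 1) / 2) : ℝ) : ℂ) *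
    fourierKernel ξ (Ppt (a + 1) (i + 1)) * Complex.one_sub_exp_mul_I_mul_one_sub_exp_neg_mul_I θ

lemma Ftrans_eq_sum_fourierKernel (N : ℕ) (f : ℕ → ℝ) (ξ : ℤ) :
    Ftrans N f ξ = (1 / 2^N : ℂ) * ∑ n ∈ Icc 1 (2^N), fourierKernel ξ (tpt N n) * f n :=
  rfl

lemma sin_pi_mul_div_two_pow_ne_zero {N : ℕ} {ξ : ℤ} (hξ0 : ξ ≠ 0) (hξ : |ξ| < 2^N) :
    Real.sin (π * ξ / 2^N) ≠ 0 := by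
  have hξR : |(ξ : ℝ)| < 2^N := by exact_mod_cast hξ
  obtain ⟨hlow, hhigh⟩ := abs_lt.mp hξR
  rw [Ne, Real.sin_eq_zero_iff_of_lt_of_lt]
  · simp [hξ0, pi_ne_zero]
  · rw [lt_div_iff₀ (by positivity)]; nlinarith [pi_pos]
  · rw [div_lt_iff₀ (by positivity)]; nlinarith [pi_pos]

/-- **Fourier coefficients of the Haar functions.** For `(k,j) ∈ Ω̂` with `k ≥ 1` and nonzero
`ξ ∈ Ξ`,
`F(Haar[k,j])[ξ] = (2^{(k−1)/2}/2^N) e^{−2πi P[k,j] ξ} (1 − cos(2π 2^{−k} ξ))/(i sin(2^{−N}πξ))`,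
and in particular
`|F(Haar[k,j])[ξ]| = (2^{(k−1)/2}/2^N) (1 − cos(2π 2^{−k} ξ))/|sin(2^{−N}πξ)|`. -/
theorem fourier_of_haar (N : ℕ) (k j : ℕ) (hk1 : 1 ≤ k) (hkN : k ≤ N)
    (hj1 : 1 ≤ j) (hj2 : j ≤ 2^(k-1))
    (ξ : ℤ) (hξ0 : ξ ≠ 0) (hξ1 : -(2^(N-1) : ℤ) < ξ) (hξ2 : ξ ≤ 2^(N-1)) :
    Ftrans N (fun n => haar k j (tpt N n)) ξ =
      (((2:ℝ) ^ (((k:ℝ) - 1) / 2) / 2^N : ℝ) : ℂ) *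
        Complex.exp (-(2 * (Real.pi : ℂ) * Complex.I) * (Ppt k j : ℂ) * (ξ : ℂ)) *
        ((1 - Real.cos (2 * Real.pi * ((2:ℝ) ^ (-(k:ℝ)) * ξ)) : ℝ) : ℂ) /
        (Complex.I * ((Real.sin ((2:ℝ) ^ (-(N:ℝ)) * (Real.pi * ξ)) : ℝ) : ℂ)) ∧
    ‖Ftrans N (fun n => haar k j (tpt N n)) ξ‖ =
      ((2:ℝ) ^ (((k:ℝ) - 1) / 2) / 2^N) *
        ((1 - Real.cos (2 * Real.pi * ((2:ℝ) ^ (-(k:ℝ)) * ξ))) /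
          |Real.sin ((2:ℝ) ^ (-(N:ℝ)) * (Real.pi * ξ))|) := by
  obtain ⟨a, rfl⟩ : ∃ a, k = a + 1 := ⟨k - 1, by omega⟩
  obtain ⟨b, rfl⟩ : ∃ b, N = a + 1 + b := ⟨N - (a + 1), by omega⟩
  obtain ⟨i, rfl⟩ : ∃ i, j = i + 1 := ⟨j - 1, by omega⟩
  have hξ : |ξ| < 2^(a + 1 + b) := by
    rw [show a + 1 + b - 1 = a + b by omega] at hξ1 hξ2
    rw [show a + 1 + b = (a + b) + 1 by omega, pow_succ]
    have hpos : (0 : ℤ) < 2^(a + b) := by positivity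
    exact abs_lt.mpr ⟨by linarith, by linarith⟩
  have hrpow : ∀ n : ℕ, (2 : ℝ) ^ (-(n : ℝ)) = 1 / 2^n := fun n => by
    rw [Real.rpow_neg zero_le_two, Real.rpow_natCast, one_div]
  have hF : Ftrans (a + 1 + b) (fun n => haar (a + 1) (i + 1) (tpt (a + 1 + b) n)) ξ =
      (((2 : ℝ) ^ ((((a + 1 : ℕ) : ℝ) - 1) / 2) / 2^(a + 1 + b) : ℝ) : ℂ) *
        fourierKernel ξ (Ppt (a + 1) (i + 1)) * ((1 - Real.cos (2 * π * ξ / 2^(a + 1)) : ℝ) : ℂ) /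
        (Complex.I * Real.sin (π * ξ / 2^(a + 1 + b))) := by
    rw [Ftrans_eq_sum_fourierKernel, sum_fourierKernel_mul_haar a b i (by simpa using hj2) ξ
      (sin_pi_mul_div_two_pow_ne_zero hξ0 hξ)]
    push_cast
    ring
  have hcos : 0 ≤ 1 - Real.cos (2 * π * ξ / 2^(a + 1)) := sub_nonneg.mpr (Real.cos_le_one _)
  rw [hrpow, hrpow, show 2 * π * (1 / 2^(a + 1) * (ξ : ℝ)) = 2 * π * ξ / 2^(a + 1) by ring,
    show 1 / 2^(a + 1 + b) * (π * (ξ : ℝ)) = π * ξ / 2^(a + 1 + b) by ring]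
  refine ⟨hF, ?_⟩
  rw [hF, norm_div, norm_mul, norm_mul, norm_mul, norm_fourierKernel, Complex.norm_I,
    Complex.norm_real, Complex.norm_real, Complex.norm_real, Real.norm_eq_abs, Real.norm_eq_abs,
    Real.norm_eq_abs, abs_of_nonneg hcos, abs_of_nonneg (by positivity)]
  ring
end
end

section
/- Let N ∈ ℕ, k ∈ {1,…,N}, ξ ∈ ℤ with ξ ≠ 0 and |ξ| ≤ 2^{N−1}, and set ω_N = 2^{−N}·2π. Then Σ_{n=1}^{2^{N−k}} e^{−i ω_N ξ (n − 1/2)} − Σ_{n=1}^{2^{N−k}} e^{i ω_N ξ (n − 1/2)} = (1 − cos(2π·2^{−k}ξ)) / (i sin(2^{−N}πξ)). -/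
/-!
Writing `a = 2^{-N} π ξ`, the `n`-th terms of the two sums differ by `-2i sin((2n - 1) a)`, and
`2 sin a · sin((2n - 1) a) = cos(2(n - 1) a) - cos(2n a)` telescopes, so the difference is
`-2i (1 - cos(2^{N-k} · 2a)) / (2 sin a)` with `2^{N-k} · 2a = 2π 2^{-k} ξ`.
-/

open Finset Real

namespace Complex

theorem exp_neg_mul_I_sub_exp_mul_I (z : ℂ) : exp (-z * I) - exp (z * I) = -2 * I * sin z := by
  rw [sin]
  linear_combination (exp (-z * I) - exp (z * I)) * I_sq

theorem two_mul_sin_mul_sin_two_mul_add_one (a : ℂ) (n : ℕ) :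
    2 * sin a * sin ((2 * n + 1) * a) = cos (2 * n * a) - cos (2 * (n + 1 : ℕ) * a) := by
  rw [cos_sub_cos]
  push_cast
  ring_nf
  rw [sin_neg]
  ring

theorem two_mul_sin_mul_sum_sin_odd_mul (a : ℂ) (M : ℕ) :
    2 * sin a * ∑ n ∈ range M, sin ((2 * n + 1) * a) = 1 - cos (2 * M * a) := by
  rw [mul_sum, sum_congr rfl fun n _ => two_mul_sin_mul_sin_two_mul_add_one a n,
    sum_range_sub' (fun n : ℕ => cos (2 * n * a))]
  simp

theorem sum_sin_odd_mul_of_sin_eq_zero {a : ℂ} (ha : sin a = 0) (M : ℕ) :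
    ∑ n ∈ range M, sin ((2 * n + 1) * a) = 0 := by
  obtain ⟨m, rfl⟩ := sin_eq_zero_iff.1 ha
  refine sum_eq_zero fun n _ => ?_
  simpa [mul_assoc] using sin_int_mul_pi ((2 * n + 1) * m)

theorem sum_sin_odd_mul (a : ℂ) (M : ℕ) :
    ∑ n ∈ range M, sin ((2 * n + 1) * a) = (1 - cos (2 * M * a)) / (2 * sin a) := by
  by_cases ha : sin a = 0
  -- `a ∈ πℤ` kills every term, matching the junk value `x / 0 = 0`
  · rw [sum_sin_odd_mul_of_sin_eq_zero ha, ha, mul_zero, div_zero]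
  · rw [eq_div_iff (mul_ne_zero two_ne_zero ha), mul_comm, two_mul_sin_mul_sum_sin_odd_mul]

end Complex

open Complex in
theorem haar_geometric_sum_difference_general (N k : ℕ) (hkN : k ≤ N)
    (ξ : ℤ) :
    (∑ n ∈ (Finset.Icc 1 (2^(N-k)) : Finset ℕ),
        Complex.exp (-Complex.I * (((2:ℝ) ^ (-(N:ℝ)) * (2 * Real.pi)) : ℝ) * (ξ : ℂ) *
          ((n : ℂ) - 1/2))) -
      (∑ n ∈ (Finset.Icc 1 (2^(N-k)) : Finset ℕ),
        Complex.exp (Complex.I * (((2:ℝ) ^ (-(N:ℝ)) * (2 * Real.pi)) : ℝ) * (ξ : ℂ) *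
          ((n : ℂ) - 1/2))) =
      ((1 - Real.cos (2 * Real.pi * ((2:ℝ) ^ (-(k:ℝ)) * ξ)) : ℝ) : ℂ) /
        (Complex.I * ((Real.sin ((2:ℝ) ^ (-(N:ℝ)) * (Real.pi * ξ))) : ℂ)) := by
  set a : ℂ := (((2:ℝ) ^ (-(N:ℝ)) * (π * ξ) : ℝ) : ℂ) with ha
  have hterm (n : ℕ) :
      exp (-I * (((2:ℝ) ^ (-(N:ℝ)) * (2 * π)) : ℝ) * ξ * (((1 + n : ℕ) : ℂ) - 1/2)) -
        exp (I * (((2:ℝ) ^ (-(N:ℝ)) * (2 * π)) : ℝ) * ξ * (((1 + n : ℕ) : ℂ) - 1/2)) =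
        -2 * I * sin ((2 * n + 1) * a) := by
    rw [← exp_neg_mul_I_sub_exp_mul_I]
    congr 2 <;> push_cast [a] <;> ring
  have hangle : 2 * ((2 ^ (N - k) : ℕ) : ℂ) * a = (2 * π * ((2:ℝ) ^ (-(k:ℝ)) * ξ) : ℝ) := by
    have : (2:ℝ) ^ (-(N:ℝ)) * 2 ^ (N - k) = 2 ^ (-(k:ℝ)) := by
      rw [← rpow_natCast, ← rpow_add two_pos, Nat.cast_sub hkN]
      ring_nf
    simp only [a, ← this]
    push_cast
    ring
  rw [← sum_sub_distrib, ← Ico_add_one_right_eq_Icc, sum_Ico_eq_sum_range, add_tsub_cancel_right]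
  simp only [hterm, ← mul_sum, sum_sin_odd_mul, hangle, ofReal_sub, ofReal_one, ofReal_sin,
    ofReal_cos, ← ha]
  simp only [div_eq_mul_inv, mul_inv, inv_I]
  ring

/-- **Difference of geometric sums.** For `1 ≤ k ≤ N`, nonzero `ξ ∈ ℤ` with `|ξ| ≤ 2^{N−1}`
and `ω_N = 2^{−N}·2π`,
`∑_{n=1}^{2^{N−k}} e^{−i ω_N ξ (n−1/2)} − ∑_{n=1}^{2^{N−k}} e^{i ω_N ξ (n−1/2)}
  = (1 − cos(2π 2^{−k} ξ)) / (i sin(2^{−N} π ξ))`. -/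
theorem haar_geometric_sum_difference (N k : ℕ) (hk1 : 1 ≤ k) (hkN : k ≤ N)
    (ξ : ℤ) (hξ0 : ξ ≠ 0) (hξ : |ξ| ≤ 2^(N-1)) :
    (∑ n ∈ (Finset.Icc 1 (2^(N-k)) : Finset ℕ),
        Complex.exp (-Complex.I * (((2:ℝ) ^ (-(N:ℝ)) * (2 * Real.pi)) : ℝ) * (ξ : ℂ) *
          ((n : ℂ) - 1/2))) -
      (∑ n ∈ (Finset.Icc 1 (2^(N-k)) : Finset ℕ),
        Complex.exp (Complex.I * (((2:ℝ) ^ (-(N:ℝ)) * (2 * Real.pi)) : ℝ) * (ξ : ℂ) *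
          ((n : ℂ) - 1/2))) =
      ((1 - Real.cos (2 * Real.pi * ((2:ℝ) ^ (-(k:ℝ)) * ξ)) : ℝ) : ℂ) /
        (Complex.I * ((Real.sin ((2:ℝ) ^ (-(N:ℝ)) * (Real.pi * ξ))) : ℂ)) :=
  haar_geometric_sum_difference_general N k hkN ξ
end
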